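/- arXiv:0709.3354 — 4 statements merged into one kernel-verified Lean document; each statement's English description precedes it below -/
import Mathlib

section
/- Let p_i, p_j ∈ S^n_+ (unit vectors in ℝ^{n+1} with positive last coordinate) and u_i, u_j ∈ ℝ^{n+1} satisfy p_i·u_i = 0 and p_j·u_j = 0. Then p_i·u_j + p_j·u_i = 0 if and only if (ψ(p_i) - ψ(p_j)) · (φ(u_i) - φ(u_j)) = 0, where ψ(x) = x/(e·x) and φ(u_k) = (u_k - (u_k·e)e)/(e·p_k) with e = (0,...,0,1). -/
open scoped BigOperators

noncomputable section

/-- Standard Euclidean dot product on `ℝ^m`. -/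
def dot {m : ℕ} (x y : Fin m → ℝ) : ℝ := ∑ i, x i * y i

/-- The vector `e = (0, …, 0, 1)` in `ℝ^{n+1}`. -/
def eVec (n : ℕ) : Fin (n + 1) → ℝ := fun i => if i = Fin.last n then 1 else 0

/-- Gnomic projection `ψ(x) = x / (e·x)`. -/
def gnomic (n : ℕ) (x : Fin (n + 1) → ℝ) : Fin (n + 1) → ℝ :=
  (dot (eVec n) x)⁻¹ • x

/-- Transfer map `φ` at base point `p`: `φ(u) = (u - (u·e)e) / (e·p)`. -/
def phiMap (n : ℕ) (p u : Fin (n + 1) → ℝ) : Fin (n + 1) → ℝ :=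
  (dot (eVec n) p)⁻¹ • (u - dot u (eVec n) • eVec n)

lemma dot_comm' {m : ℕ} (x y : Fin m → ℝ) : dot x y = dot y x := by
  simp [dot, mul_comm]

lemma dot_sub_left {m : ℕ} (x x' y : Fin m → ℝ) :
    dot (x - x') y = dot x y - dot x' y := by
  simp [dot, sub_mul, Finset.sum_sub_distrib]

lemma dot_sub_right {m : ℕ} (x y y' : Fin m → ℝ) :
    dot x (y - y') = dot x y - dot x y' := by
  simp [dot, mul_sub, Finset.sum_sub_distrib]

lemma dot_smul_left {m : ℕ} (c : ℝ) (x y : Fin m → ℝ) :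
    dot (c • x) y = c * dot x y := by
  simp [dot, Finset.mul_sum, mul_assoc]

lemma dot_smul_right {m : ℕ} (c : ℝ) (x y : Fin m → ℝ) :
    dot x (c • y) = c * dot x y := by
  simp [dot, Finset.mul_sum]; apply Finset.sum_congr rfl; intro i _; ring

theorem spherical_edge_constraint_iff_euclidean (n : ℕ)
    (p_i p_j u_i u_j : Fin (n + 1) → ℝ)
    (hpi : dot p_i p_i = 1) (hpj : dot p_j p_j = 1)
    (hei : 0 < dot (eVec n) p_i) (hej : 0 < dot (eVec n) p_j)
    (hti : dot p_i u_i = 0) (htj : dot p_j u_j = 0) :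
    dot p_i u_j + dot p_j u_i = 0 ↔
      dot (gnomic n p_i - gnomic n p_j) (phiMap n p_i u_i - phiMap n p_j u_j) = 0 := by
  set a := dot (eVec n) p_i with ha'
  set b := dot (eVec n) p_j with hb'
  have ha : a ≠ 0 := ne_of_gt hei
  have hb : b ≠ 0 := ne_of_gt hej
  have h1 : dot p_i (eVec n) = a := dot_comm' _ _
  have h2 : dot p_j (eVec n) = b := dot_comm' _ _
  have key : dot (gnomic n p_i - gnomic n p_j) (phiMap n p_i u_i - phiMap n p_j u_j)
      = -((a * b)⁻¹ * (dot p_i u_j + dot p_j u_i)) := by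
    simp only [gnomic, phiMap, ← ha', ← hb', dot_sub_left, dot_sub_right,
      dot_smul_left, dot_smul_right, h1, h2, hti, htj]
    field_simp
    ring
  rw [key, neg_eq_zero, mul_eq_zero]
  have hc : (a * b)⁻¹ ≠ 0 := inv_ne_zero (mul_ne_zero ha hb)
  exact (or_iff_right hc).symm

end
end

section
/- Let p_i, p_j ∈ ℝ^{n+1} with p_i·p_i > 0, p_j·p_j > 0, and suppose ⟨p_i,u_i⟩_k = 0 and ⟨p_j,u_j⟩_k = 0. Then ⟨p_i,u_j⟩_k + ⟨p_j,u_i⟩_k = 0 if and only if (ψ_S(p_i) - ψ_S(p_j)) · (φ_S(u_i) - φ_S(u_j)) = 0, where ψ_S(x) = x/√(x·x) and φ_S(u_m) = J_k(u_m)/√(p_m·p_m). -/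
open scoped BigOperators

noncomputable section

/-- Sign of the `m`-th coordinate in the form `⟨·,·⟩_k` on `ℝ^{n+1}`. -/
def sgn (n k : ℕ) (m : Fin (n + 1)) : ℝ := if (m : ℕ) < n + 1 - k then 1 else -1

/-- The bilinear form `⟨x,y⟩_k` of signature `(n-k+1, k)` on `ℝ^{n+1}`. -/
def formK (n k : ℕ) (x y : Fin (n + 1) → ℝ) : ℝ := ∑ m, sgn n k m * x m * y m

/-- The involution `J_k` negating the last `k` coordinates. -/
def Jmap (n k : ℕ) (x : Fin (n + 1) → ℝ) : Fin (n + 1) → ℝ := fun m => sgn n k m * x m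

/-- Normalization to the unit sphere: `ψ_S(x) = x / √(x·x)`. -/
def psiS {m : ℕ} (x : Fin m → ℝ) : Fin m → ℝ := (Real.sqrt (dot x x))⁻¹ • x

/-- Transfer map `φ_S` at base point `p`: `φ_S(u) = J_k(u) / √(p·p)`. -/
def phiS (n k : ℕ) (p u : Fin (n + 1) → ℝ) : Fin (n + 1) → ℝ :=
  (Real.sqrt (dot p p))⁻¹ • Jmap n k u

theorem X_edge_constraint_iff_spherical (n k : ℕ) (p_i p_j u_i u_j : Fin (n + 1) → ℝ)
    (hpi : 0 < dot p_i p_i) (hpj : 0 < dot p_j p_j)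
    (hti : formK n k p_i u_i = 0) (htj : formK n k p_j u_j = 0) :
    formK n k p_i u_j + formK n k p_j u_i = 0 ↔
      dot (psiS p_i - psiS p_j) (phiS n k p_i u_i - phiS n k p_j u_j) = 0 := by
  set ai := Real.sqrt (dot p_i p_i) with hai
  set aj := Real.sqrt (dot p_j p_j) with haj
  have hai0 : 0 < ai := Real.sqrt_pos.mpr hpi
  have haj0 : 0 < aj := Real.sqrt_pos.mpr hpj
  have expand : ∀ m : Fin (n + 1),
      (psiS p_i - psiS p_j) m * (phiS n k p_i u_i - phiS n k p_j u_j) m =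
        ai⁻¹ * ai⁻¹ * (sgn n k m * p_i m * u_i m)
        - ai⁻¹ * aj⁻¹ * (sgn n k m * p_i m * u_j m)
        - aj⁻¹ * ai⁻¹ * (sgn n k m * p_j m * u_i m)
        + aj⁻¹ * aj⁻¹ * (sgn n k m * p_j m * u_j m) := by
    intro m
    simp only [psiS, phiS, Jmap, Pi.sub_apply, Pi.smul_apply, smul_eq_mul, ← hai, ← haj]
    ring
  have key : dot (psiS p_i - psiS p_j) (phiS n k p_i u_i - phiS n k p_j u_j) =
      - (ai⁻¹ * aj⁻¹) * (formK n k p_i u_j + formK n k p_j u_i) := by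
    unfold dot
    rw [Finset.sum_congr rfl (fun m _ => expand m)]
    simp only [Finset.sum_add_distrib, Finset.sum_sub_distrib, ← Finset.mul_sum]
    have e1 : ∑ m : Fin (n+1), sgn n k m * p_i m * u_i m = formK n k p_i u_i := rfl
    have e2 : ∑ m : Fin (n+1), sgn n k m * p_j m * u_j m = formK n k p_j u_j := rfl
    have e3 : ∑ m : Fin (n+1), sgn n k m * p_i m * u_j m = formK n k p_i u_j := rfl
    have e4 : ∑ m : Fin (n+1), sgn n k m * p_j m * u_i m = formK n k p_j u_i := rfl
    rw [e1, e2, e3, e4, hti, htj]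
    ring
  rw [key]
  constructor
  · intro h; rw [h]; ring
  · intro h
    rcases mul_eq_zero.mp h with h' | h'
    · exfalso
      have : ai⁻¹ * aj⁻¹ ≠ 0 := by positivity
      exact this (neg_eq_zero.mp h')
    · exact h'

end
end

section
/- Let K ∈ ℝ and p_i, p_j ∈ ℝ^n with 1 + K(p_i·p_i) ≠ 0. Define k_{ij} = ((1 + K(p_i·p_j))/(1 + K(p_i·p_i))) p_i - p_j and T_{p_i} = I + K(p_i p_iᵀ). Then the row vector k_{ij} multiplied by T_{p_i} equals p_i - p_j, i.e., T_{p_i}ᵀ k_{ij} = p_i - p_j (T_{p_i} is symmetric). -/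
open scoped BigOperators

noncomputable section

/-- The matrix `T_p = I + K (p pᵀ)`. -/
def Tmat {n : ℕ} (K : ℝ) (p : Fin n → ℝ) : Matrix (Fin n) (Fin n) ℝ :=
  1 + K • Matrix.vecMulVec p p

/-- The rigidity-matrix row entry
`k_{ij} = ((1 + K (p_i·p_j))/(1 + K (p_i·p_i))) p_i - p_j`. -/
def kRow {n : ℕ} (K : ℝ) (p_i p_j : Fin n → ℝ) : Fin n → ℝ :=
  ((1 + K * dot p_i p_j) / (1 + K * dot p_i p_i)) • p_i - p_j

open Matrix

theorem dot_eq_dotProduct {m : ℕ} (x y : Fin m → ℝ) : dot x y = x ⬝ᵥ y := rfl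

theorem Tmat_transpose {n : ℕ} (K : ℝ) (p : Fin n → ℝ) : (Tmat K p)ᵀ = Tmat K p := by
  rw [Tmat, transpose_add, transpose_one, transpose_smul, transpose_vecMulVec]

theorem vecMul_Tmat {n : ℕ} (K : ℝ) (p v : Fin n → ℝ) :
    v ᵥ* Tmat K p = v + (K * (v ⬝ᵥ p)) • p := by
  rw [Tmat, vecMul_add, vecMul_one, vecMul_smul, vecMul_vecMulVec, smul_smul]

theorem kRow_dotProduct {n : ℕ} (K : ℝ) (p q : Fin n → ℝ) :
    kRow K p q ⬝ᵥ p =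
      (1 + K * dot p q) / (1 + K * dot p p) * dot p p - dot p q := by
  rw [kRow, sub_dotProduct, smul_dotProduct, smul_eq_mul, dot_eq_dotProduct,
    dot_eq_dotProduct, dotProduct_comm q]

theorem kRow_mul_Tmat (n : ℕ) (K : ℝ) (p_i p_j : Fin n → ℝ)
    (h : 1 + K * dot p_i p_i ≠ 0) :
    Matrix.vecMul (kRow K p_i p_j) (Tmat K p_i) = p_i - p_j ∧
      Matrix.transpose (Tmat K p_i) = Tmat K p_i := by
  refine ⟨?_, Tmat_transpose K p_i⟩
  set c := (1 + K * dot p_i p_j) / (1 + K * dot p_i p_i)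
  -- The coefficient of `p_i` in `kRow K p_i p_j ᵥ* Tmat K p_i` is `c (1 + K p_i·p_i) - K p_i·p_j = 1`.
  have hc : c * (1 + K * dot p_i p_i) = 1 + K * dot p_i p_j := div_mul_cancel₀ _ h
  rw [vecMul_Tmat, kRow_dotProduct, kRow]
  linear_combination (norm := module) hc • p_i

end
end

section
/- Let G = (V,E) be a finite graph, p : V → ℝ^n a configuration with 1 + K(p_i·p_i) ≠ 0 for all i ∈ V, and let R_X(G,p) and R_E(G,p) be the |E|×(n|V|) matrices whose row for edge {i,j} has k_{ij} = ((1+K(p_i·p_j))/(1+K(p_i·p_i)))p_i - p_j in the columns of vertex i, k_{ji} in the columns of vertex j, and zeros elsewhere (for R_E, with p_i - p_j and p_j - p_i respectively). Let T_K(G,p) be the block-diagonal matrix with blocks T_{p_i} = I + K(p_i p_iᵀ). Then R_X(G,p) · T_K(G,p) = R_E(G,p), and consequently the kernels of R_X(G,p) and R_E(G,p) have the same dimension. -/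
open scoped BigOperators

noncomputable section

/-- The rigidity matrix of the framework in the projective model of the
curvature-`K` geometry: rows are indexed by edges `e` (with endpoints `a e`
and `b e`), columns by pairs (vertex, coordinate). -/
def RX {V ι : Type*} [DecidableEq V] {n : ℕ} (K : ℝ) (a b : ι → V)
    (p : V → Fin n → ℝ) : Matrix ι (V × Fin n) ℝ :=
  fun e vl =>
    if vl.1 = a e then kRow K (p (a e)) (p (b e)) vl.2
    else if vl.1 = b e then kRow K (p (b e)) (p (a e)) vl.2
    else 0

/-- The Euclidean rigidity matrix: the row of edge `e` has `p_{a e} - p_{b e}`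
in the columns of vertex `a e` and `p_{b e} - p_{a e}` in those of `b e`. -/
def RE {V ι : Type*} [DecidableEq V] {n : ℕ} (a b : ι → V)
    (p : V → Fin n → ℝ) : Matrix ι (V × Fin n) ℝ :=
  fun e vl =>
    if vl.1 = a e then (p (a e) - p (b e)) vl.2
    else if vl.1 = b e then (p (b e) - p (a e)) vl.2
    else 0

/-- The block-diagonal matrix with blocks `T_{p_i} = I + K (p_i p_iᵀ)`. -/
def TK {V : Type*} [DecidableEq V] {n : ℕ} (K : ℝ) (p : V → Fin n → ℝ) :
    Matrix (V × Fin n) (V × Fin n) ℝ :=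
  fun vl wm =>
    if vl.1 = wm.1 then
      (if vl.2 = wm.2 then 1 else 0) + K * p vl.1 vl.2 * p vl.1 wm.2
    else 0

/-! Right multiplication by the block `I + K p pᵀ` sends a row block `u` to `u + K (u·p) p`.
For `u = k_{ij}` the coefficient of `p_i` in `k_{ij}` is chosen exactly so that this is
`p_i - p_j`, which gives `R_X T_K = R_E` block by block. The block map is injective because
`u + K (u·p) p = 0` gives `(u·p)(1 + K p·p) = 0` after dotting with `p`, so `u·p = 0` and `u = 0`;
hence `T_K` is invertible and right multiplication by it preserves the nullity. -/

open scoped Matrix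

theorem kRow_add_smul_eq_sub {n : ℕ} (K : ℝ) (x y : Fin n → ℝ) (hx : 1 + K * (x ⬝ᵥ x) ≠ 0) :
    kRow K x y + (K * (kRow K x y ⬝ᵥ x)) • x = x - y := by
  set c := (1 + K * (x ⬝ᵥ y)) / (1 + K * (x ⬝ᵥ x))
  have hk : kRow K x y = c • x - y := rfl
  have hc : c * (1 + K * (x ⬝ᵥ x)) = 1 + K * (x ⬝ᵥ y) := div_mul_cancel₀ _ hx
  rw [hk, sub_dotProduct, smul_dotProduct, dotProduct_comm y x, smul_eq_mul, sub_add_eq_add_sub,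
    ← add_smul, sub_left_inj]
  convert one_smul ℝ x using 2
  linear_combination hc

theorem eq_zero_of_add_smul_eq_zero {𝕜 ι : Type*} [Field 𝕜] [Fintype ι] {K : 𝕜} {u q : ι → 𝕜}
    (hq : 1 + K * (q ⬝ᵥ q) ≠ 0) (h : u + (K * (u ⬝ᵥ q)) • q = 0) : u = 0 := by
  have huq : (u ⬝ᵥ q) * (1 + K * (q ⬝ᵥ q)) = 0 := by
    have := congrArg (· ⬝ᵥ q) h
    simp only [add_dotProduct, smul_dotProduct, zero_dotProduct, smul_eq_mul] at this
    linear_combination this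
  have : u ⬝ᵥ q = 0 := (mul_eq_zero.mp huq).resolve_right hq
  simpa only [this, mul_zero, zero_smul, add_zero] using h

theorem curry_vecMul_TK {V : Type*} [Fintype V] [DecidableEq V] {n : ℕ} (K : ℝ)
    (p : V → Fin n → ℝ) (x : V × Fin n → ℝ) (w : V) :
    Function.curry (x ᵥ* TK K p) w =
      Function.curry x w + (K * (Function.curry x w ⬝ᵥ p w)) • p w := by
  ext m
  rw [Function.curry_apply, Matrix.vecMul, dotProduct, Fintype.sum_prod_type,
    Finset.sum_eq_single w (fun v _ hv => by simp [TK, hv]) (by simp)]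
  simp only [TK, ↓reduceIte, mul_add, mul_ite, mul_one, mul_zero, Finset.sum_add_distrib,
    Finset.sum_ite_eq', Finset.mem_univ, dotProduct, Function.curry, Finset.mul_sum, Pi.add_apply,
    Pi.smul_apply, smul_eq_mul, Finset.sum_mul, add_right_inj]
  exact Finset.sum_congr rfl fun l _ => by ring

theorem isUnit_TK {V : Type*} [Fintype V] [DecidableEq V] {n : ℕ} {K : ℝ}
    {p : V → Fin n → ℝ} (hp : ∀ i, 1 + K * dot (p i) (p i) ≠ 0) : IsUnit (TK K p) := by
  refine Matrix.vecMul_injective_iff_isUnit.mp fun x y hxy => ?_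
  rw [← sub_eq_zero, ← Matrix.sub_vecMul] at hxy
  rw [← sub_eq_zero]
  ext ⟨w, m⟩
  have hblock := eq_zero_of_add_smul_eq_zero (hp w)
    (by rw [← curry_vecMul_TK, hxy]; rfl)
  exact congrFun hblock m

theorem curry_RX {V ι : Type*} [DecidableEq V] {n : ℕ} (K : ℝ) (a b : ι → V)
    (p : V → Fin n → ℝ) (e : ι) (w : V) :
    Function.curry (RX K a b p e) w =
      if w = a e then kRow K (p (a e)) (p (b e))
      else if w = b e then kRow K (p (b e)) (p (a e)) else 0 := by
  ext m
  simp only [Function.curry_apply, RX]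
  split_ifs <;> rfl

theorem curry_RE {V ι : Type*} [DecidableEq V] {n : ℕ} (a b : ι → V)
    (p : V → Fin n → ℝ) (e : ι) (w : V) :
    Function.curry (RE a b p e) w =
      if w = a e then p (a e) - p (b e) else if w = b e then p (b e) - p (a e) else 0 := by
  ext m
  simp only [Function.curry_apply, RE]
  split_ifs <;> rfl

theorem RX_mul_TK {V ι : Type*} [Fintype V] [DecidableEq V] {n : ℕ} (K : ℝ) (a b : ι → V)
    (p : V → Fin n → ℝ) (hp : ∀ i, 1 + K * dot (p i) (p i) ≠ 0) :
    RX K a b p * TK K p = RE a b p := by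
  ext e ⟨w, m⟩
  suffices Function.curry ((RX K a b p * TK K p) e) w = Function.curry (RE a b p e) w from
    congrFun this m
  rw [Matrix.mul_apply_eq_vecMul, curry_vecMul_TK, curry_RX, curry_RE]
  split_ifs with ha hb
  · rw [ha, kRow_add_smul_eq_sub K _ _ (hp (a e))]
  · rw [hb, kRow_add_smul_eq_sub K _ _ (hp (b e))]
  · simp

theorem Matrix.finrank_ker_mulVecLin_mul_of_isUnit {𝕜 m n : Type*} [Field 𝕜] [Fintype n]
    [DecidableEq n] (A : Matrix m n 𝕜) {T : Matrix n n 𝕜} (hT : IsUnit T) :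
    Module.finrank 𝕜 (LinearMap.ker (A * T).mulVecLin) =
      Module.finrank 𝕜 (LinearMap.ker A.mulVecLin) := by
  have hrank := Matrix.rank_mul_eq_left_of_isUnit_det T A ((Matrix.isUnit_iff_isUnit_det T).mp hT)
  have := LinearMap.finrank_range_add_finrank_ker (A * T).mulVecLin
  have := LinearMap.finrank_range_add_finrank_ker A.mulVecLin
  unfold Matrix.rank at hrank
  omega

theorem rigidity_matrix_transfer_general {V ι : Type*} [Fintype V] [DecidableEq V]
    (n : ℕ) (K : ℝ) (a b : ι → V)
    (p : V → Fin n → ℝ) (hp : ∀ i, 1 + K * dot (p i) (p i) ≠ 0) :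
    RX K a b p * TK K p = RE a b p ∧
      Module.finrank ℝ (LinearMap.ker (Matrix.mulVecLin (RX K a b p))) =
        Module.finrank ℝ (LinearMap.ker (Matrix.mulVecLin (RE a b p))) := by
  have hRE := RX_mul_TK K a b p hp
  refine ⟨hRE, ?_⟩
  rw [← hRE, Matrix.finrank_ker_mulVecLin_mul_of_isUnit _ (isUnit_TK hp)]

theorem rigidity_matrix_transfer {V ι : Type*} [Fintype V] [DecidableEq V]
    [Fintype ι] (n : ℕ) (K : ℝ) (a b : ι → V) (hab : ∀ e, a e ≠ b e)
    (p : V → Fin n → ℝ) (hp : ∀ i, 1 + K * dot (p i) (p i) ≠ 0) :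
    RX K a b p * TK K p = RE a b p ∧
      Module.finrank ℝ (LinearMap.ker (Matrix.mulVecLin (RX K a b p))) =
        Module.finrank ℝ (LinearMap.ker (Matrix.mulVecLin (RE a b p))) :=
  rigidity_matrix_transfer_general n K a b p hp

end
end
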